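/- Practically stable initial set for switched continuous systems (Corollary 4): Set λ := min_{p∈P} λ_p > 0 and α̂(s) := max_{p∈P} α_p(s), and fix δ ∈ (0, λ). Then the set S := ⋂_{p∈P} { x ∈ ℝ^n : V_p(x) ≤ ω } is nonempty and compact, and for every switching signal σ with average dwell time N_a ≥ ln(μ)/(λ−δ) and chatter bound N_0 ≥ 1, every bounded piecewise-continuous disturbance d, and every solution x : [0,∞) → ℝ^n of the switched system with x(0) ∈ S: for every t ≥ 0 there exists p ∈ P with V_p(x(t)) ≤ μ^{1+N_0}·ω + (μ^{1+N_0}/δ)·α̂(‖d‖∞). -/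

import Mathlib

/-- A class `K∞` function: continuous, strictly increasing on `[0,∞)`, vanishing at `0`,
and tending to `∞`. -/
def IsClassKInf (a : ℝ → ℝ) : Prop :=
  ContinuousOn a (Set.Ici 0) ∧ StrictMonoOn a (Set.Ici 0) ∧ a 0 = 0 ∧
    Filter.Tendsto a Filter.atTop Filter.atTop

/-- A class `KL` function. -/
def IsClassKL (b : ℝ → ℝ → ℝ) : Prop :=
  (∀ t, 0 ≤ t → IsClassKInf fun s => b s t) ∧
  (∀ s, 0 ≤ s → StrictAntiOn (b s) (Set.Ici 0)) ∧
  (∀ s, 0 ≤ s → Filter.Tendsto (b s) Filter.atTop (nhds 0))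

/-- A locally finite subset of `ℝ`: finitely many points in every compact interval. -/
def LocFin (T : Set ℝ) : Prop := ∀ a b : ℝ, (T ∩ Set.Icc a b).Finite

/-- `sg` is piecewise constant and right-continuous with switching-instant set `T`:
it is constant along any interval containing no switching instant `(s, t] ∩ T = ∅`. -/
def PCOn {P : Type} (sg : ℝ → P) (T : Set ℝ) : Prop :=
  ∀ s t : ℝ, s ≤ t → Set.Ioc s t ∩ T = ∅ → sg s = sg t

/-- Number of switching instants in `[tl, t)`. -/
noncomputable def switchCountC (T : Set ℝ) (tl t : ℝ) : ℕ := (T ∩ Set.Ico tl t).ncard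

/-- The switching-instant set `T` satisfies the average dwell-time bound with average
dwell time `Na` and chatter bound `N0`. -/
def HasADTC (T : Set ℝ) (N0 Na : ℝ) : Prop :=
  ∀ tl t : ℝ, 0 ≤ tl → tl ≤ t → (switchCountC T tl t : ℝ) ≤ N0 + (t - tl) / Na

/-- The supremum norm of a signal over `[0, ∞)`. -/
noncomputable def supNorm {m : ℕ} (d : ℝ → EuclideanSpace ℝ (Fin m)) : ℝ :=
  sSup ((fun t => ‖d t‖) '' Set.Ici 0)

/-!
Along a solution put `W u = V_{σ u} (x u)`, `λ = min λ_p` and `Â = max_p α_p ‖d‖∞`. Between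
switches `W' ≤ -λ W + Â`; at a switch `W` jumps to at most `max (μ W) ω` (comparability of the
`V_p` above `κ`, the bound `ω` below it). Fix `t`, let `N(u, t]` count the switches in `(u, t]`
and weight `W u` by `μ ^ N(u, t] e^{-λ (t - u)}`. The average dwell-time condition bounds this
weight by `K e^{-δ (t - u)}` with `K = μ^{1+N₀}`, so the weighted value minus
`K Â e^{-δ (t - u)} / δ` does not increase between switches, and a jump cannot push it above
`K ω`. Hence it stays below `K ω` from `u = 0` up to `u = t`, where the weight is `1`.
-/

open Set Real

theorem induction_across_finite_set {T : Set ℝ} {a b : ℝ} {Q : ℝ → Prop}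
    (hT : (T ∩ Ioo a b).Finite) (hab : a ≤ b) (ha : Q a)
    (step : ∀ r s, a ≤ r → r < s → s ≤ b → T ∩ Ioo r s = ∅ → Q r → Q s) : Q b := by
  suffices ∀ k : ℕ, ∀ r ∈ Icc a b, (T ∩ Ioo r b).ncard = k → Q r → Q b from
    this _ a ⟨le_rfl, hab⟩ rfl ha
  intro k
  induction k using Nat.strong_induction_on with
  | _ k ih =>
    rintro r ⟨har, hrb⟩ rfl hr
    have hfin : (T ∩ Ioo r b).Finite :=
      hT.subset (inter_subset_inter_right _ (Ioo_subset_Ioo_left har))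
    rcases (T ∩ Ioo r b).eq_empty_or_nonempty with hempty | hne
    · rcases hrb.eq_or_lt with rfl | hlt
      · exact hr
      · exact step r b har hlt le_rfl hempty hr
    obtain ⟨s, hs, hmin⟩ := exists_min_image _ id hfin hne
    have hgap : T ∩ Ioo r s = ∅ :=
      eq_empty_of_forall_notMem fun w hw =>
        (hmin w ⟨hw.1, hw.2.1, hw.2.2.trans hs.2.2⟩).not_gt hw.2.2
    have hsub : T ∩ Ioo s b ⊂ T ∩ Ioo r b :=
      ssubset_of_subset_of_ne (inter_subset_inter_right _ (Ioo_subset_Ioo_left hs.2.1.le))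
        fun h => (h ▸ hs).2.1.false
    exact ih _ (ncard_lt_ncard hsub hfin) s ⟨har.trans hs.2.1.le, hs.2.2.le⟩ rfl
      (step r s har hs.2.1 hs.2.2.le hgap hr)

theorem le_of_hasDerivAt_nonpos_off_finite {g : ℝ → ℝ} {E : Set ℝ} {a b : ℝ}
    (hE : (E ∩ Ioo a b).Finite) (hab : a ≤ b) (hg : ContinuousOn g (Icc a b))
    (hg' : ∀ r ∈ Ioo a b \ E, ∃ g', HasDerivAt g g' r ∧ g' ≤ 0) : g b ≤ g a := by
  refine induction_across_finite_set (Q := fun r => g r ≤ g a) hE hab le_rfl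
    fun r s har hrs hsb hgap hr => ?_
  have hderiv (u : ℝ) (hu : u ∈ Ioo r s) : ∃ g', HasDerivAt g g' u ∧ g' ≤ 0 :=
    hg' u ⟨⟨har.trans_lt hu.1, hu.2.trans_le hsb⟩,
      fun huE => (eq_empty_iff_forall_notMem.1 hgap u) ⟨huE, hu⟩⟩
  have hanti : AntitoneOn g (Icc r s) := by
    refine antitoneOn_of_deriv_nonpos (convex_Icc r s) (hg.mono (Icc_subset_Icc har hsb))
      ?_ ?_ <;> rw [interior_Icc]
    · exact fun u hu => (hderiv u hu).choose_spec.1.differentiableAt.differentiableWithinAt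
    · intro u hu
      obtain ⟨g', hg', hle⟩ := hderiv u hu
      rwa [hg'.deriv]
  exact (hanti ⟨le_rfl, hrs.le⟩ ⟨hrs.le, le_rfl⟩ hrs.le).trans hr

theorem hasDerivAt_exp_neg_mul_sub (c t r : ℝ) :
    HasDerivAt (fun u => exp (-c * (t - u))) (c * exp (-c * (t - r))) r := by
  have := (((hasDerivAt_id r).const_sub t).const_mul (-c)).exp
  simp only [id_eq, mul_neg, mul_one, neg_neg] at this
  rwa [mul_comm] at this

theorem exp_weighted_sub_le_of_hasDerivAt_le {W : ℝ → ℝ} {E : Set ℝ} {a b t l δ A β γ : ℝ}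
    (hE : (E ∩ Ioo a b).Finite) (hab : a ≤ b) (hδ : 0 < δ) (hβ : 0 ≤ β)
    (hW : ContinuousOn W (Icc a b))
    (hW' : ∀ r ∈ Ioo a b \ E, ∃ w, HasDerivAt W w r ∧ w ≤ -l * W r + A)
    (hβγ : ∀ r ∈ Ioo a b, β * exp (-l * (t - r)) * A ≤ γ * exp (-δ * (t - r))) :
    β * exp (-l * (t - b)) * W b - γ / δ * exp (-δ * (t - b)) ≤
      β * exp (-l * (t - a)) * W a - γ / δ * exp (-δ * (t - a)) := by
  refine le_of_hasDerivAt_nonpos_off_finite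
    (g := fun r => β * exp (-l * (t - r)) * W r - γ / δ * exp (-δ * (t - r))) hE hab
    (by fun_prop) fun r hr => ?_
  obtain ⟨w, hw, hwle⟩ := hW' r hr
  have hd := (((hasDerivAt_exp_neg_mul_sub l t r).mul hw).const_mul β).sub
    ((hasDerivAt_exp_neg_mul_sub δ t r).const_mul (γ / δ))
  refine ⟨_, hd.congr_of_eventuallyEq (.of_forall fun u => ?_), ?_⟩
  · simp only [Pi.sub_apply, Pi.mul_apply]
    ring
  have hlin : β * exp (-l * (t - r)) * w ≤ β * exp (-l * (t - r)) * (-l * W r + A) :=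
    mul_le_mul_of_nonneg_left hwle (by positivity)
  have hγ : γ / δ * (δ * exp (-δ * (t - r))) = γ * exp (-δ * (t - r)) := by
    field_simp
  linarith [hβγ r hr.1]

section AverageDwellTime

variable {T : Set ℝ} {μ N0 Na s t : ℝ}

theorem ncard_inter_Icc_le_of_hasADTC (hT : LocFin T) (hADT : HasADTC T N0 Na) (hs : 0 ≤ s)
    (hst : s ≤ t) : ((T ∩ Icc s t).ncard : ℝ) ≤ 1 + N0 + (t - s) / Na := by
  have hsub : T ∩ Icc s t ⊆ insert t (T ∩ Ico s t) := by
    rintro w ⟨hwT, hsw, hwt⟩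
    rcases hwt.eq_or_lt with rfl | hlt
    · exact mem_insert _ _
    · exact mem_insert_of_mem _ ⟨hwT, hsw, hlt⟩
  have hfin : (insert t (T ∩ Ico s t)).Finite :=
    ((hT s t).subset (inter_subset_inter_right _ Ico_subset_Icc_self)).insert t
  have hcount : (T ∩ Icc s t).ncard ≤ switchCountC T s t + 1 :=
    (ncard_le_ncard hsub hfin).trans (ncard_insert_le _ _)
  have hadt := hADT s t hs hst
  have hcount' : ((T ∩ Icc s t).ncard : ℝ) ≤ switchCountC T s t + 1 := by exact_mod_cast hcount
  linarith

theorem rpow_div_le_exp {c u : ℝ} (hμ : 0 < μ) (hNa : 0 < Na) (hc : 0 < c)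
    (hlog : log μ / c ≤ Na) (hu : 0 ≤ u) : μ ^ (u / Na) ≤ exp (c * u) := by
  rw [rpow_def_of_pos hμ, exp_le_exp]
  calc log μ * (u / Na) ≤ c * Na * (u / Na) := by
        gcongr
        exact (div_le_iff₀ hc).1 hlog |>.trans_eq (mul_comm _ _)
    _ = c * u := by field_simp

theorem pow_ncard_mul_exp_le {l δ : ℝ} (hT : LocFin T) (hADT : HasADTC T N0 Na) (hμ : 1 ≤ μ)
    (hδl : δ < l) (hNa : 0 < Na) (hNalog : log μ / (l - δ) ≤ Na) (hs : 0 ≤ s) (hst : s ≤ t) :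
    μ ^ (T ∩ Icc s t).ncard * exp (-l * (t - s)) ≤ μ ^ (1 + N0) * exp (-δ * (t - s)) := by
  have hμ0 : 0 < μ := one_pos.trans_le hμ
  calc μ ^ (T ∩ Icc s t).ncard * exp (-l * (t - s))
      = μ ^ ((T ∩ Icc s t).ncard : ℝ) * exp (-l * (t - s)) := by rw [rpow_natCast]
    _ ≤ μ ^ (1 + N0 + (t - s) / Na) * exp (-l * (t - s)) := by
        gcongr
        exact ncard_inter_Icc_le_of_hasADTC hT hADT hs hst
    _ = μ ^ (1 + N0) * (μ ^ ((t - s) / Na) * exp (-l * (t - s))) := by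
        rw [rpow_add hμ0]; ring
    _ ≤ μ ^ (1 + N0) * (exp ((l - δ) * (t - s)) * exp (-l * (t - s))) := by
        gcongr
        exact rpow_div_le_exp hμ0 hNa (sub_pos.2 hδl) hNalog (sub_nonneg.2 hst)
    _ = μ ^ (1 + N0) * exp (-δ * (t - s)) := by rw [← exp_add]; ring_nf

theorem inter_Ioc_eq_inter_Icc_of_inter_Ioo_eq_empty {r : ℝ} (hrs : r < s)
    (hgap : T ∩ Ioo r s = ∅) : T ∩ Ioc r t = T ∩ Icc s t := by
  ext w
  refine ⟨fun ⟨hwT, hrw, hwt⟩ => ⟨hwT, ?_, hwt⟩, fun ⟨hwT, hsw, hwt⟩ => ⟨hwT, hrs.trans_le hsw, hwt⟩⟩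
  by_contra! hws
  exact (eq_empty_iff_forall_notMem.1 hgap w) ⟨hwT, hrw, hws⟩

theorem PCOn.eq_of_inter_Ioo_eq_empty {P : Type} {sg : ℝ → P} (hPC : PCOn sg T) {r u : ℝ}
    (hru : r ≤ u) (hus : u < s) (hgap : T ∩ Ioo r s = ∅) : sg r = sg u :=
  hPC r u hru <| eq_empty_of_forall_notMem fun w ⟨hw, hwT⟩ =>
    (eq_empty_iff_forall_notMem.1 hgap w) ⟨hwT, hw.1, hw.2.trans_lt hus⟩

theorem pow_ncard_mul_le_max {P : Type} {sg : ℝ → P} {W : P → ℝ → ℝ} {ω r : ℝ}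
    (hT : LocFin T) (hPC : PCOn sg T) (hjump : ∀ p q u, W q u ≤ max (μ * W p u) ω)
    (hμ : 0 ≤ μ) (hrs : r < s) (hst : s ≤ t) (hgap : T ∩ Ioo r s = ∅) :
    μ ^ (T ∩ Ioc s t).ncard * W (sg s) s ≤
      max (μ ^ (T ∩ Ioc r t).ncard * W (sg r) s) (μ ^ (T ∩ Ioc s t).ncard * ω) := by
  rw [inter_Ioc_eq_inter_Icc_of_inter_Ioo_eq_empty hrs hgap]
  by_cases hsT : s ∈ T
  · have hfin : (T ∩ Ioc s t).Finite :=
      (hT s t).subset (inter_subset_inter_right _ Ioc_subset_Icc_self)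
    rw [← Ioc_insert_left hst, inter_insert_of_mem hsT, ncard_insert_of_notMem (by simp) hfin,
      pow_succ, mul_assoc, ← mul_max_of_nonneg _ _ (by positivity)]
    exact mul_le_mul_of_nonneg_left (hjump _ _ _) (by positivity)
  · have hsg : sg r = sg s := hPC r s hrs.le <| eq_empty_of_forall_notMem fun w ⟨hw, hwT⟩ =>
      hw.2.eq_or_lt.elim (fun h => hsT (h ▸ hwT))
        fun h => (eq_empty_iff_forall_notMem.1 hgap w) ⟨hwT, hw.1, h⟩
    rw [← Ioc_insert_left hst, inter_insert_of_notMem hsT, hsg]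
    exact le_max_left _ _

end AverageDwellTime

section Invariant

variable {P : Type} {sg : ℝ → P} {T E : Set ℝ} {W : P → ℝ → ℝ} {μ ω l δ A K t : ℝ}

theorem pow_ncard_Ioc_mul_exp_le {u : ℝ} (hT : LocFin T) (hμ : 1 ≤ μ) (hδ : 0 ≤ δ) (hut : u ≤ t)
    (hweight : μ ^ (T ∩ Icc u t).ncard * exp (-l * (t - u)) ≤ K * exp (-δ * (t - u))) :
    μ ^ (T ∩ Ioc u t).ncard * exp (-l * (t - u)) ≤ K := by
  have hcard : (T ∩ Ioc u t).ncard ≤ (T ∩ Icc u t).ncard :=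
    ncard_le_ncard (inter_subset_inter_right _ Ioc_subset_Icc_self) (hT u t)
  have hK : 0 ≤ K := nonneg_of_mul_nonneg_left ((by positivity : (0 : ℝ) ≤ _).trans hweight)
    (exp_pos _)
  calc μ ^ (T ∩ Ioc u t).ncard * exp (-l * (t - u))
      ≤ μ ^ (T ∩ Icc u t).ncard * exp (-l * (t - u)) := by gcongr
    _ ≤ K * exp (-δ * (t - u)) := hweight
    _ ≤ K := mul_le_of_le_one_right hK (exp_le_one_iff.2 (by nlinarith))

theorem weighted_bound_step {r s : ℝ} (hT : LocFin T) (hE : LocFin E) (hPC : PCOn sg T)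
    (hW : ∀ p, ContinuousOn (W p) (Ici 0))
    (hW' : ∀ r, 0 ≤ r → r ∉ T → r ∉ E → ∃ w, HasDerivAt (W (sg r)) w r ∧
      w ≤ -l * W (sg r) r + A)
    (hjump : ∀ p q r, W q r ≤ max (μ * W p r) ω) (hμ : 1 ≤ μ) (hω : 0 ≤ ω) (hA : 0 ≤ A)
    (hδ : 0 < δ)
    (hweight : ∀ u, 0 ≤ u → u ≤ t →
      μ ^ (T ∩ Icc u t).ncard * exp (-l * (t - u)) ≤ K * exp (-δ * (t - u)))
    (hr : 0 ≤ r) (hrs : r < s) (hst : s ≤ t) (hgap : T ∩ Ioo r s = ∅)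
    (hQr : μ ^ (T ∩ Ioc r t).ncard * exp (-l * (t - r)) * W (sg r) r ≤
      K * ω + K * A / δ * exp (-δ * (t - r))) :
    μ ^ (T ∩ Ioc s t).ncard * exp (-l * (t - s)) * W (sg s) s ≤
      K * ω + K * A / δ * exp (-δ * (t - s)) := by
  have hs : 0 ≤ s := hr.trans hrs.le
  have hK : 0 ≤ K := (by positivity : (0 : ℝ) ≤ _).trans
    (pow_ncard_Ioc_mul_exp_le hT hμ hδ.le hst (hweight s hs hst))
  have hmode (u : ℝ) (hu : u ∈ Ico r s) : sg u = sg r :=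
    (hPC.eq_of_inter_Ioo_eq_empty hu.1 hu.2 hgap).symm
  have hgap' (u : ℝ) (hu : u ≤ s) : T ∩ Ioo r u = ∅ :=
    subset_empty_iff.1 (hgap ▸ inter_subset_inter_right _ (Ioo_subset_Ioo_right hu))
  have hflow := exp_weighted_sub_le_of_hasDerivAt_le (W := W (sg r)) (t := t)
    (β := μ ^ (T ∩ Ioc r t).ncard) (γ := K * A)
    ((hE r s).subset (inter_subset_inter_right _ Ioo_subset_Icc_self)) hrs.le hδ (by positivity)
    ((hW _).mono fun u hu => hr.trans hu.1)
    (fun u ⟨hu, huE⟩ => by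
      have huT : u ∉ T := fun huT => (eq_empty_iff_forall_notMem.1 hgap u) ⟨huT, hu⟩
      rw [← hmode u ⟨hu.1.le, hu.2⟩]
      exact hW' u (hr.trans hu.1.le) huT huE)
    (fun u hu => by
      rw [inter_Ioc_eq_inter_Icc_of_inter_Ioo_eq_empty hu.1 (hgap' u hu.2.le)]
      linarith [mul_le_mul_of_nonneg_right
        (hweight u (hr.trans hu.1.le) (hu.2.le.trans hst)) hA])
  have hjump' := mul_le_mul_of_nonneg_left
    (pow_ncard_mul_le_max hT hPC hjump (zero_le_one.trans hμ) hrs hst hgap)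
    (exp_pos (-l * (t - s))).le
  rw [mul_max_of_nonneg _ _ (exp_pos _).le] at hjump'
  have hreset := mul_le_mul_of_nonneg_right
    (pow_ncard_Ioc_mul_exp_le hT hμ hδ.le hst (hweight s hs hst)) hω
  have hgain : 0 ≤ K * A / δ * exp (-δ * (t - s)) := by positivity
  calc μ ^ (T ∩ Ioc s t).ncard * exp (-l * (t - s)) * W (sg s) s
      = exp (-l * (t - s)) * (μ ^ (T ∩ Ioc s t).ncard * W (sg s) s) := by ring
    _ ≤ _ := hjump'
    _ ≤ K * ω + K * A / δ * exp (-δ * (t - s)) := max_le (by linarith) (by linarith)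

end Invariant

theorem le_practical_bound_of_hasADTC {P : Type} {sg : ℝ → P} {T E : Set ℝ} {W : P → ℝ → ℝ}
    {μ ω l δ A N0 Na t : ℝ} (hT : LocFin T) (hE : LocFin E) (hPC : PCOn sg T)
    (hW : ∀ p, ContinuousOn (W p) (Ici 0))
    (hW' : ∀ r, 0 ≤ r → r ∉ T → r ∉ E → ∃ w, HasDerivAt (W (sg r)) w r ∧
      w ≤ -l * W (sg r) r + A)
    (hjump : ∀ p q r, W q r ≤ max (μ * W p r) ω) (hW0 : W (sg 0) 0 ≤ ω)
    (hμ : 1 ≤ μ) (hω : 0 ≤ ω) (hA : 0 ≤ A) (hδ : 0 < δ) (hδl : δ < l)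
    (hNa : 0 < Na) (hNalog : log μ / (l - δ) ≤ Na) (hADT : HasADTC T N0 Na) (ht : 0 ≤ t) :
    W (sg t) t ≤ μ ^ (1 + N0) * ω + μ ^ (1 + N0) / δ * A := by
  set K := μ ^ (1 + N0)
  have hweight (u : ℝ) (hu : 0 ≤ u) (hut : u ≤ t) :
      μ ^ (T ∩ Icc u t).ncard * exp (-l * (t - u)) ≤ K * exp (-δ * (t - u)) :=
    pow_ncard_mul_exp_le hT hADT hμ hδl hNa hNalog hu hut
  suffices μ ^ (T ∩ Ioc t t).ncard * exp (-l * (t - t)) * W (sg t) t ≤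
      K * ω + K * A / δ * exp (-δ * (t - t)) by
    simp only [Ioc_self, inter_empty, ncard_empty, pow_zero, sub_self, mul_zero, exp_zero,
      one_mul, mul_one] at this
    linarith [show K * A / δ = K / δ * A by ring]
  refine induction_across_finite_set (Q := fun u => μ ^ (T ∩ Ioc u t).ncard *
      exp (-l * (t - u)) * W (sg u) u ≤ K * ω + K * A / δ * exp (-δ * (t - u)))
    ((hT 0 t).subset (inter_subset_inter_right _ Ioo_subset_Icc_self)) ht ?_
    fun r s hr hrs hst hgap => weighted_bound_step hT hE hPC hW hW' hjump hμ hω hA hδ hweight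
      hr hrs hst hgap
  have hμ0 : 0 < μ := one_pos.trans_le hμ
  calc μ ^ (T ∩ Ioc 0 t).ncard * exp (-l * (t - 0)) * W (sg 0) 0
      ≤ μ ^ (T ∩ Ioc 0 t).ncard * exp (-l * (t - 0)) * ω :=
        mul_le_mul_of_nonneg_left hW0 (by positivity)
    _ ≤ K * ω := mul_le_mul_of_nonneg_right
        (pow_ncard_Ioc_mul_exp_le hT hμ hδ.le ht (hweight 0 le_rfl ht)) hω
    _ ≤ K * ω + K * A / δ * exp (-δ * (t - 0)) := le_add_of_nonneg_right (by positivity)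

theorem IsClassKInf.nonneg {a : ℝ → ℝ} (ha : IsClassKInf a) {s : ℝ} (hs : 0 ≤ s) : 0 ≤ a s :=
  ha.2.2.1 ▸ ha.2.1.monotoneOn self_mem_Ici hs hs

theorem IsClassKInf.isCompact_sublevel {E : Type*} [NormedAddCommGroup E] [ProperSpace E]
    {a : ℝ → ℝ} (ha : IsClassKInf a) {V : E → ℝ} (hV : Continuous V) {x₀ : E}
    (hle : ∀ x, a ‖x - x₀‖ ≤ V x) (ω : ℝ) : IsCompact {x | V x ≤ ω} := by
  obtain ⟨R, hR⟩ := (ha.2.2.2.eventually_gt_atTop ω).exists_forall_of_atTop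
  refine Metric.isCompact_of_isClosed_isBounded (isClosed_le hV continuous_const)
    ((Metric.isBounded_closedBall (x := x₀) (r := max R 0)).subset fun x hx => ?_)
  rw [Metric.mem_closedBall, dist_eq_norm]
  by_contra! hfar
  have := ha.2.1 (mem_Ici.2 (le_max_right R 0)) (mem_Ici.2 (norm_nonneg _)) hfar
  linarith [hR _ (le_max_left R 0), hle x, show V x ≤ ω from hx]

theorem apply_norm_le_sup'_supNorm {m : ℕ} {P : Type} [Fintype P] [Nonempty P]
    {a : P → ℝ → ℝ} (ha : ∀ p, IsClassKInf (a p)) {d : ℝ → EuclideanSpace ℝ (Fin m)}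
    (hd : BddAbove ((fun t => ‖d t‖) '' Ici 0)) {t : ℝ} (ht : 0 ≤ t) (p : P) :
    a p ‖d t‖ ≤ Finset.univ.sup' Finset.univ_nonempty fun q => a q (supNorm d) := by
  have hdt : ‖d t‖ ≤ supNorm d := le_csSup hd ⟨t, ht, rfl⟩
  exact ((ha p).2.1.monotoneOn (norm_nonneg _) ((norm_nonneg _).trans hdt) hdt).trans
    (Finset.le_sup' (fun q => a q (supNorm d)) (Finset.mem_univ p))

theorem practically_stable_initial_set_continuous_general
    (n m : ℕ) (P : Type) [Fintype P] [Nonempty P]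
    (f : P → EuclideanSpace ℝ (Fin n) → EuclideanSpace ℝ (Fin m) → EuclideanSpace ℝ (Fin n))
    (xstar : P → EuclideanSpace ℝ (Fin n))
    (hfix : ∀ p, f p (xstar p) 0 = 0)
    (V : P → EuclideanSpace ℝ (Fin n) → ℝ)
    (hVsmooth : ∀ p, ContDiff ℝ 1 (V p))
    (hVnonneg : ∀ p x, 0 ≤ V p x)
    (alow aup ain : P → ℝ → ℝ)
    (halow : ∀ p, IsClassKInf (alow p))
    (hain : ∀ p, IsClassKInf (ain p))
    (lam : P → ℝ)
    (hsandwich : ∀ p x, alow p ‖x - xstar p‖ ≤ V p x ∧ V p x ≤ aup p ‖x - xstar p‖)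
    (hdecr : ∀ p x u, fderiv ℝ (V p) x (f p x u) ≤ -lam p * V p x + ain p ‖u‖)
    (κ : ℝ) (hκ : 0 < κ)
    (μ : ℝ) (hμ : 1 ≤ μ)
    (hμb : ∀ (p q : P) (x : EuclideanSpace ℝ (Fin n)), κ ≤ V p x → V q x ≤ μ * V p x)
    (ω : ℝ)
    (hωb : ∀ (p : P) (x : EuclideanSpace ℝ (Fin n)), (∃ q : P, V q x ≤ κ) → V p x ≤ ω)
    (δ : ℝ) (hδ0 : 0 < δ) (hδ1 : δ < Finset.univ.inf' Finset.univ_nonempty lam) :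
    (⋂ p : P, {x : EuclideanSpace ℝ (Fin n) | V p x ≤ ω}).Nonempty ∧
    IsCompact (⋂ p : P, {x : EuclideanSpace ℝ (Fin n) | V p x ≤ ω}) ∧
    ∀ (sg : ℝ → P) (T : Set ℝ), LocFin T → PCOn sg T →
      ∀ N0 Na : ℝ, 1 ≤ N0 → 0 < Na →
        Real.log μ / (Finset.univ.inf' Finset.univ_nonempty lam - δ) ≤ Na →
        HasADTC T N0 Na →
        ∀ (d : ℝ → EuclideanSpace ℝ (Fin m)) (Dd : Set ℝ), LocFin Dd →
          ContinuousOn d (Set.Ici 0 \ Dd) →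
          BddAbove ((fun t => ‖d t‖) '' Set.Ici 0) →
          ∀ x : ℝ → EuclideanSpace ℝ (Fin n),
            ContinuousOn x (Set.Ici 0) →
            (∀ t : ℝ, 0 ≤ t → t ∉ T → t ∉ Dd →
              HasDerivAt x (f (sg t) (x t) (d t)) t) →
            x 0 ∈ ⋂ p : P, {y : EuclideanSpace ℝ (Fin n) | V p y ≤ ω} →
            ∀ t : ℝ, 0 ≤ t → ∃ p : P,
              V p (x t) ≤ μ ^ (1 + N0) * ω +
                μ ^ (1 + N0) / δ *
                  (Finset.univ.sup' Finset.univ_nonempty fun q => ain q (supNorm d)) := by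
  set l := Finset.univ.inf' Finset.univ_nonempty lam
  have hl (p : P) : l ≤ lam p := Finset.inf'_le _ (Finset.mem_univ p)
  have hVstar (p : P) : V p (xstar p) = 0 := by
    have h := hdecr p (xstar p) 0
    rw [hfix, map_zero, norm_zero, (hain p).2.2.1] at h
    nlinarith [hVnonneg p (xstar p), hδ0.trans (hδ1.trans_le (hl p))]
  obtain ⟨p₀⟩ := ‹Nonempty P›
  refine ⟨⟨xstar p₀, mem_iInter.2 fun p => hωb p _ ⟨p₀, (hVstar p₀).trans_le hκ.le⟩⟩,
    ((halow p₀).isCompact_sublevel (hVsmooth p₀).continuous (fun x => (hsandwich p₀ x).1) ω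
      |>.of_isClosed_subset (isClosed_iInter fun p => isClosed_le (hVsmooth p).continuous
        continuous_const) (iInter_subset _ p₀)), ?_⟩
  intro sg T hT hPC N0 Na _ hNa hNalog hADT d Dd hDd _ hd x hx hx' hx0 t ht
  have hx0' := mem_iInter.1 hx0
  have hgain (r : ℝ) (hr : 0 ≤ r) := apply_norm_le_sup'_supNorm hain hd hr
  refine ⟨sg t, le_practical_bound_of_hasADTC (W := fun p r => V p (x r)) hT hDd hPC
    (fun p => (hVsmooth p).continuous.comp_continuousOn hx) (fun r hr hrT hrD => ?_)
    (fun p q r => ?_) (hx0' (sg 0)) hμ ((hVnonneg p₀ (x 0)).trans (hx0' p₀))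
    (((hain p₀).nonneg (norm_nonneg _)).trans (hgain 0 le_rfl p₀)) hδ0 hδ1 hNa hNalog hADT ht⟩
  · refine ⟨_, ((hVsmooth _).differentiable one_ne_zero _).hasFDerivAt.comp_hasDerivAt r
      (hx' r hr hrT hrD), ?_⟩
    nlinarith [hdecr (sg r) (x r) (d r), hgain r hr (sg r), hl (sg r), hVnonneg (sg r) (x r)]
  · rcases le_or_gt κ (V p (x r)) with h | h
    · exact le_max_of_le_left (hμb p q _ h)
    · exact le_max_of_le_right (hωb q _ ⟨p, h.le⟩)

/-- Corollary 4: practically stable initial set for switched continuous systems. -/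
theorem practically_stable_initial_set_continuous
    (n m : ℕ) (P : Type) [Fintype P] [Nonempty P]
    (f : P → EuclideanSpace ℝ (Fin n) → EuclideanSpace ℝ (Fin m) → EuclideanSpace ℝ (Fin n))
    (hf : ∀ p, LocallyLipschitz fun xu : EuclideanSpace ℝ (Fin n) × EuclideanSpace ℝ (Fin m) =>
      f p xu.1 xu.2)
    (xstar : P → EuclideanSpace ℝ (Fin n))
    (hfix : ∀ p, f p (xstar p) 0 = 0)
    (V : P → EuclideanSpace ℝ (Fin n) → ℝ)
    (hVsmooth : ∀ p, ContDiff ℝ 1 (V p))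
    (hVnonneg : ∀ p x, 0 ≤ V p x)
    (alow aup ain : P → ℝ → ℝ)
    (halow : ∀ p, IsClassKInf (alow p)) (haup : ∀ p, IsClassKInf (aup p))
    (hain : ∀ p, IsClassKInf (ain p))
    (lam : P → ℝ) (hlam : ∀ p, 0 < lam p)
    (hsandwich : ∀ p x, alow p ‖x - xstar p‖ ≤ V p x ∧ V p x ≤ aup p ‖x - xstar p‖)
    (hdecr : ∀ p x u, fderiv ℝ (V p) x (f p x u) ≤ -lam p * V p x + ain p ‖u‖)
    (κ : ℝ) (hκ : 0 < κ)
    (μ : ℝ) (hμ : 1 ≤ μ)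
    (hμb : ∀ (p q : P) (x : EuclideanSpace ℝ (Fin n)), κ ≤ V p x → V q x ≤ μ * V p x)
    (ω : ℝ) (hω : 0 < ω)
    (hωb : ∀ (p : P) (x : EuclideanSpace ℝ (Fin n)), (∃ q : P, V q x ≤ κ) → V p x ≤ ω)
    (δ : ℝ) (hδ0 : 0 < δ) (hδ1 : δ < Finset.univ.inf' Finset.univ_nonempty lam) :
    (⋂ p : P, {x : EuclideanSpace ℝ (Fin n) | V p x ≤ ω}).Nonempty ∧
    IsCompact (⋂ p : P, {x : EuclideanSpace ℝ (Fin n) | V p x ≤ ω}) ∧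
    ∀ (sg : ℝ → P) (T : Set ℝ), LocFin T → PCOn sg T →
      ∀ N0 Na : ℝ, 1 ≤ N0 → 0 < Na →
        Real.log μ / (Finset.univ.inf' Finset.univ_nonempty lam - δ) ≤ Na →
        HasADTC T N0 Na →
        ∀ (d : ℝ → EuclideanSpace ℝ (Fin m)) (Dd : Set ℝ), LocFin Dd →
          ContinuousOn d (Set.Ici 0 \ Dd) →
          BddAbove ((fun t => ‖d t‖) '' Set.Ici 0) →
          ∀ x : ℝ → EuclideanSpace ℝ (Fin n),
            ContinuousOn x (Set.Ici 0) →
            (∀ t : ℝ, 0 ≤ t → t ∉ T → t ∉ Dd →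
              HasDerivAt x (f (sg t) (x t) (d t)) t) →
            x 0 ∈ ⋂ p : P, {y : EuclideanSpace ℝ (Fin n) | V p y ≤ ω} →
            ∀ t : ℝ, 0 ≤ t → ∃ p : P,
              V p (x t) ≤ μ ^ (1 + N0) * ω +
                μ ^ (1 + N0) / δ *
                  (Finset.univ.sup' Finset.univ_nonempty fun q => ain q (supNorm d)) :=
  practically_stable_initial_set_continuous_general n m P f xstar hfix V hVsmooth hVnonneg alow aup
    ain halow hain lam hsandwich hdecr κ hκ μ hμ hμb ω hωb δ hδ0 hδ1
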